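/- Let X be a Weibull random variable with shape α > 0 and scale β > 0 and density f(x;α,β). Fix real s and r with r > 0, and set ζ = s + (r-1)(α-1). If ζ > -α, then E[X^s log²(X) f^{r-1}(X;α,β)] = (2 β^{s-r+1} α^{r-2} / r^{1+ζ/α}) Γ(1 + ζ/α) log(β / r^{1/α}) ψ(1 + ζ/α) + (β^{s-r+1} α^{r-1} / r^{1+ζ/α}) Γ(1 + ζ/α) { log²(β / r^{1/α}) + (1/α²)[ ψ(1 + ζ/α)² + ψ'(1 + ζ/α) ] }, where ψ is the digamma function and ψ' its derivative (the trigamma function). -/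

import Mathlib

open Filter Topology Real MeasureTheory

/-- The Weibull probability density function with shape `α` and scale `β`. -/
noncomputable def weibullPDF (α β x : ℝ) : ℝ :=
  (α / β) * (x / β) ^ (α - 1) * Real.exp (-(x / β) ^ α)

/-- The digamma function `ψ(z) = d/dz log Γ(z) = Γ'(z)/Γ(z)`. -/
noncomputable def digamma (z : ℝ) : ℝ :=
  deriv (fun t => Real.log (Real.Gamma t)) z

/-- The trigamma function `ψ'(z)`, the derivative of the digamma function. -/
noncomputable def trigamma (z : ℝ) : ℝ :=
  deriv digamma z

/-! Substituting `w = r (x/β)^α` turns the integral into `∫₀^∞ w^a (c + d log w)² e^{-w} dw` with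
`a = ζ/α`, `c = log (β / r^{1/α})` and `d = 1/α`. After expanding the square, the moments
`∫₀^∞ w^a logᵏ w e^{-w} dw` (`k ≤ 2`) are the derivatives `Γ⁽ᵏ⁾(1 + a)`, obtained by differentiating
the Mellin transform of `e^{-t}` under the integral sign, and `Γ' = Γψ`, `Γ'' = Γ(ψ² + ψ')`. -/

open Set Asymptotics

/-- The growth conditions under which the Mellin transform of `g` converges on `0 < Re s` and may
be differentiated under the integral sign. -/
def MellinRegular (g : ℝ → ℝ) : Prop :=
  ContinuousOn g (Ioi 0) ∧ (∀ a : ℝ, g =O[atTop] (· ^ (-a))) ∧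
    ∀ b : ℝ, 0 < b → g =O[𝓝[>] 0] (· ^ (-b))

theorem cpow_smul_ofReal {t : ℝ} (ht : 0 < t) (x v : ℝ) :
    (t : ℂ) ^ ((x : ℂ) - 1) • (v : ℂ) = ((t ^ (x - 1) * v : ℝ) : ℂ) := by
  rw [smul_eq_mul, ← Complex.ofReal_one, ← Complex.ofReal_sub, ← Complex.ofReal_cpow ht.le,
    Complex.ofReal_mul]

theorem mellin_ofReal (g : ℝ → ℝ) (x : ℝ) :
    mellin (fun t => (g t : ℂ)) x = ((∫ t in Ioi 0, t ^ (x - 1) * g t : ℝ) : ℂ) := by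
  rw [mellin, ← integral_complex_ofReal]
  exact setIntegral_congr_fun measurableSet_Ioi fun t ht => cpow_smul_ofReal ht x (g t)

namespace MellinRegular

variable {g : ℝ → ℝ}

theorem log_mul (hg : MellinRegular g) : MellinRegular fun t => log t * g t := by
  obtain ⟨hc, htop, hbot⟩ := hg
  refine ⟨(continuousOn_log.mono fun t ht => ne_of_gt ht).mul hc, fun a => ?_, fun b hb => ?_⟩
  · exact isBigO_rpow_top_log_smul (lt_add_one a) (htop (a + 1))
  · exact isBigO_rpow_zero_log_smul (half_lt_self hb) (hbot (b / 2) (half_pos hb))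

theorem mellinConvergent (hg : MellinRegular g) {s : ℂ} (hs : 0 < s.re) :
    MellinConvergent (fun t => (g t : ℂ)) s :=
  mellinConvergent_of_isBigO_rpow
    (Complex.continuous_ofReal.comp_continuousOn hg.1 |>.locallyIntegrableOn measurableSet_Ioi)
    (Complex.isBigO_ofReal_left.mpr (hg.2.1 (s.re + 1))) (lt_add_one _)
    (Complex.isBigO_ofReal_left.mpr (hg.2.2 (s.re / 2) (half_pos hs))) (half_lt_self hs)

theorem integrableOn (hg : MellinRegular g) {x : ℝ} (hx : 0 < x) :
    IntegrableOn (fun t => t ^ (x - 1) * g t) (Ioi 0) := by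
  refine IntegrableOn.congr_fun (hg.mellinConvergent (s := x) hx).re (fun t ht => ?_)
    measurableSet_Ioi
  rw [cpow_smul_ofReal ht]
  exact Complex.ofReal_re _

theorem hasDerivAt_integral (hg : MellinRegular g) {x : ℝ} (hx : 0 < x) :
    HasDerivAt (fun y => ∫ t in Ioi 0, t ^ (y - 1) * g t)
      (∫ t in Ioi 0, t ^ (x - 1) * (log t * g t)) x := by
  have hlog : (fun t => log t • (g t : ℂ)) = fun t => ((log t * g t : ℝ) : ℂ) := by
    funext t
    rw [Complex.real_smul, Complex.ofReal_mul]
  have h := (mellin_hasDerivAt_of_isBigO_rpow (f := fun t => (g t : ℂ)) (s := x)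
    (Complex.continuous_ofReal.comp_continuousOn hg.1 |>.locallyIntegrableOn measurableSet_Ioi)
    (Complex.isBigO_ofReal_left.mpr (hg.2.1 (x + 1))) (lt_add_one _)
    (Complex.isBigO_ofReal_left.mpr (hg.2.2 (x / 2) (half_pos hx))) (half_lt_self hx)).2
  rw [hlog] at h
  simpa only [mellin_ofReal, Complex.ofReal_re] using h.real_of_complex

end MellinRegular

theorem mellinRegular_exp_neg : MellinRegular fun t => exp (-t) := by
  refine ⟨(continuous_exp.comp continuous_neg).continuousOn, fun a => ?_, fun b hb => ?_⟩
  · simpa only [neg_one_mul] using (isLittleO_exp_neg_mul_rpow_atTop zero_lt_one (-a)).isBigO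
  · refine IsBigO.of_bound 1 ?_
    filter_upwards [Ioo_mem_nhdsGT zero_lt_one] with t ⟨ht0, ht1⟩
    rw [one_mul, norm_of_nonneg (exp_pos _).le, norm_of_nonneg (rpow_pos_of_pos ht0 _).le]
    exact (exp_le_one_iff.mpr (neg_nonpos.mpr ht0.le)).trans
      (one_le_rpow_of_pos_of_le_one_of_nonpos ht0 ht1.le (neg_nonpos.mpr hb.le))

theorem mellinRegular_log_pow_mul_exp_neg (k : ℕ) :
    MellinRegular fun t => log t ^ k * exp (-t) := by
  induction k with
  | zero => simpa only [pow_zero, one_mul] using mellinRegular_exp_neg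
  | succ k ih => simpa only [pow_succ', mul_assoc] using ih.log_mul

/-- The `k`-th derivative of `Γ` at `x > 0`. -/
noncomputable def gammaLogMoment (k : ℕ) (x : ℝ) : ℝ :=
  ∫ t in Ioi 0, t ^ (x - 1) * (log t ^ k * exp (-t))

section GammaLogMoment

variable {x : ℝ}

theorem hasDerivAt_gammaLogMoment (k : ℕ) (hx : 0 < x) :
    HasDerivAt (gammaLogMoment k) (gammaLogMoment (k + 1) x) x := by
  show HasDerivAt (fun y => gammaLogMoment k y) _ x
  simpa only [gammaLogMoment, pow_succ', mul_assoc]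
    using (mellinRegular_log_pow_mul_exp_neg k).hasDerivAt_integral hx

theorem gammaLogMoment_zero (hx : 0 < x) : gammaLogMoment 0 x = Gamma x := by
  rw [Gamma_eq_integral hx, gammaLogMoment]
  simp only [pow_zero, one_mul, mul_comm]

theorem hasDerivAt_Gamma (hx : 0 < x) : HasDerivAt Gamma (gammaLogMoment 1 x) x :=
  (hasDerivAt_gammaLogMoment 0 hx).congr_of_eventuallyEq <| by
    filter_upwards [Ioi_mem_nhds hx] with y hy using (gammaLogMoment_zero hy).symm

theorem digamma_eq_div (hx : 0 < x) : digamma x = gammaLogMoment 1 x / Gamma x :=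
  ((hasDerivAt_Gamma hx).log (Gamma_pos_of_pos hx).ne').deriv

theorem gammaLogMoment_one (hx : 0 < x) : gammaLogMoment 1 x = Gamma x * digamma x := by
  rw [digamma_eq_div hx, mul_div_cancel₀ _ (Gamma_pos_of_pos hx).ne']

theorem gammaLogMoment_two (hx : 0 < x) :
    gammaLogMoment 2 x = Gamma x * (digamma x ^ 2 + trigamma x) := by
  have hΓ := (Gamma_pos_of_pos hx).ne'
  have hψ : HasDerivAt digamma ((gammaLogMoment 2 x * Gamma x
      - gammaLogMoment 1 x * gammaLogMoment 1 x) / Gamma x ^ 2) x :=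
    ((hasDerivAt_gammaLogMoment 1 hx).div (hasDerivAt_Gamma hx) hΓ).congr_of_eventuallyEq <| by
      filter_upwards [Ioi_mem_nhds hx] with y hy using digamma_eq_div hy
  rw [trigamma, hψ.deriv, digamma_eq_div hx]
  field_simp
  ring

end GammaLogMoment

theorem integral_rpow_mul_linear_log_sq_mul_exp_neg {a : ℝ} (ha : -1 < a) (c d : ℝ) :
    ∫ w in Ioi 0, w ^ a * ((c + d * log w) ^ 2 * exp (-w)) =
      Gamma (1 + a) * (c ^ 2 + 2 * c * d * digamma (1 + a) +
        d ^ 2 * (digamma (1 + a) ^ 2 + trigamma (1 + a))) := by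
  have hx : 0 < 1 + a := by linarith
  have hint (k : ℕ) : IntegrableOn (fun w => w ^ a * (log w ^ k * exp (-w))) (Ioi 0) := by
    simpa only [add_sub_cancel_left] using (mellinRegular_log_pow_mul_exp_neg k).integrableOn hx
  have hexpand : (fun w => w ^ a * ((c + d * log w) ^ 2 * exp (-w))) = fun w =>
      c ^ 2 * (w ^ a * (log w ^ 0 * exp (-w))) + 2 * c * d * (w ^ a * (log w ^ 1 * exp (-w))) +
        d ^ 2 * (w ^ a * (log w ^ 2 * exp (-w))) := by
    funext w
    ring
  have hmoment (k : ℕ) :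
      ∫ w in Ioi 0, w ^ a * (log w ^ k * exp (-w)) = gammaLogMoment k (1 + a) := by
    rw [gammaLogMoment, add_sub_cancel_left]
  rw [hexpand, integral_add ?_ ((hint 2).const_mul _),
    integral_add ((hint 0).const_mul _) ((hint 1).const_mul _), integral_const_mul,
    integral_const_mul, integral_const_mul, hmoment, hmoment, hmoment,
    gammaLogMoment_zero hx, gammaLogMoment_one hx, gammaLogMoment_two hx]
  · ring
  · exact ((hint 0).const_mul _).add ((hint 1).const_mul _)

theorem integral_comp_div_rpow_Ioi_of_pos {α β : ℝ} (hα : 0 < α) (hβ : 0 < β) (g : ℝ → ℝ) :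
    ∫ x in Ioi 0, α / β * (x / β) ^ (α - 1) * g ((x / β) ^ α) = ∫ w in Ioi 0, g w :=
  calc ∫ x in Ioi 0, α / β * (x / β) ^ (α - 1) * g ((x / β) ^ α)
      = β⁻¹ * ∫ x in Ioi 0, (α * (β⁻¹ * x) ^ (α - 1)) • g ((β⁻¹ * x) ^ α) := by
        rw [← integral_const_mul]
        refine setIntegral_congr_fun measurableSet_Ioi fun x _ => ?_
        simp only [smul_eq_mul, ← div_eq_inv_mul]
        ring
    _ = ∫ w in Ioi 0, g w := by
        rw [integral_comp_mul_left_Ioi (fun u => (α * u ^ (α - 1)) • g (u ^ α)) 0 (inv_pos.mpr hβ),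
          mul_zero, integral_comp_rpow_Ioi_of_pos hα, smul_eq_mul, inv_inv,
          inv_mul_cancel_left₀ hβ.ne']

theorem weibullPDF_rpow {α β x : ℝ} (hα : 0 ≤ α) (hβ : 0 ≤ β) (hx : 0 ≤ x) (r : ℝ) :
    weibullPDF α β x ^ r = (α / β) ^ r * (x / β) ^ ((α - 1) * r) * exp (-(r * (x / β) ^ α)) := by
  have hxβ : 0 ≤ x / β := div_nonneg hx hβ
  rw [weibullPDF, mul_rpow (by positivity) (exp_pos _).le,
    mul_rpow (div_nonneg hα hβ) (by positivity), ← exp_mul, rpow_mul hxβ, neg_mul, mul_comm _ r]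

theorem rpow_mul_log_sq_mul_weibullPDF_rpow {α β s r x : ℝ} (hα : 0 < α) (hβ : 0 < β)
    (hr : 0 < r) (hx : 0 < x) :
    x ^ s * log x ^ 2 * weibullPDF α β x ^ r =
      β ^ (s - r + 1) * α ^ (r - 1) * r ^ (-((s + (r - 1) * (α - 1)) / α)) *
        (α / β * (x / β) ^ (α - 1) *
          ((r * (x / β) ^ α) ^ ((s + (r - 1) * (α - 1)) / α) *
            ((log (β / r ^ (1 / α)) + 1 / α * log (r * (x / β) ^ α)) ^ 2 *
              exp (-(r * (x / β) ^ α))))) := by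
  set ζ := s + (r - 1) * (α - 1)
  set t := x / β with ht_def
  have ht : 0 < t := div_pos hx hβ
  have hxt : x = β * t := by rw [ht_def, mul_div_cancel₀ _ hβ.ne']
  have hlog : log (β / r ^ (1 / α)) + 1 / α * log (r * t ^ α) = log x := by
    rw [log_div hβ.ne' (rpow_pos_of_pos hr _).ne', log_rpow hr,
      log_mul hr.ne' (rpow_pos_of_pos ht _).ne', log_rpow ht, hxt, log_mul hβ.ne' ht.ne']
    field_simp
    ring
  have hpow :
      (r * t ^ α) ^ (ζ / α) = r ^ (ζ / α) * (t ^ s * t ^ ((α - 1) * r) / t ^ (α - 1)) := by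
    rw [mul_rpow hr.le (rpow_pos_of_pos ht _).le, ← rpow_mul ht.le, mul_div_cancel₀ _ hα.ne',
      ← rpow_add ht, ← rpow_sub ht]
    congr 2
    ring
  have hαr : α ^ (r - 1) = α ^ r / α := rpow_sub_one hα.ne' r
  have hβr : β ^ (s - r + 1) = β ^ s * β / β ^ r := by
    rw [rpow_add_one hβ.ne', rpow_sub hβ, div_mul_eq_mul_div]
  rw [hlog, hpow, hαr, hβr, rpow_neg hr.le, weibullPDF_rpow hα.le hβ.le hx.le,
    div_rpow hα.le hβ.le, hxt, mul_rpow hβ.le ht.le]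
  have := (rpow_pos_of_pos ht (α - 1)).ne'
  have := (rpow_pos_of_pos hβ r).ne'
  have := (rpow_pos_of_pos hr (ζ / α)).ne'
  field_simp

/-- Third main tool: `E[X^s log²(X) f^{r-1}(X;α,β)]`. -/
theorem weibullPDF_third_main_tool (α β s r : ℝ) (hα : 0 < α) (hβ : 0 < β) (hr : 0 < r)
    (hζ : s + (r - 1) * (α - 1) > -α) :
    (∫ x in Set.Ioi (0 : ℝ), x ^ s * (Real.log x) ^ 2 * (weibullPDF α β x) ^ r) =
      2 * β ^ (s - r + 1) * α ^ (r - 2) / r ^ (1 + (s + (r - 1) * (α - 1)) / α) *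
        Real.Gamma (1 + (s + (r - 1) * (α - 1)) / α) *
        Real.log (β / r ^ (1 / α)) * digamma (1 + (s + (r - 1) * (α - 1)) / α) +
      β ^ (s - r + 1) * α ^ (r - 1) / r ^ (1 + (s + (r - 1) * (α - 1)) / α) *
        Real.Gamma (1 + (s + (r - 1) * (α - 1)) / α) *
        ((Real.log (β / r ^ (1 / α))) ^ 2 +
          (1 / α ^ 2) * ((digamma (1 + (s + (r - 1) * (α - 1)) / α)) ^ 2 +
            trigamma (1 + (s + (r - 1) * (α - 1)) / α))) := by
  set a := (s + (r - 1) * (α - 1)) / α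
  set L := log (β / r ^ (1 / α))
  set φ : ℝ → ℝ := fun w => w ^ a * ((L + 1 / α * log w) ^ 2 * exp (-w))
  have ha : -1 < a := by rw [lt_div_iff₀ hα]; linarith
  set K := β ^ (s - r + 1) * α ^ (r - 1) * r ^ (-a) with hK
  have hsubst : ∫ x in Ioi 0, x ^ s * log x ^ 2 * weibullPDF α β x ^ r =
      K * r⁻¹ * ∫ w in Ioi 0, φ w :=
    calc ∫ x in Ioi 0, x ^ s * log x ^ 2 * weibullPDF α β x ^ r
        = ∫ x in Ioi 0, K * (α / β * (x / β) ^ (α - 1) * φ (r * (x / β) ^ α)) :=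
          setIntegral_congr_fun measurableSet_Ioi fun x hx =>
            rpow_mul_log_sq_mul_weibullPDF_rpow hα hβ hr hx
      _ = K * ∫ x in Ioi 0, φ (r * x) := by
          rw [integral_const_mul, integral_comp_div_rpow_Ioi_of_pos hα hβ (fun u => φ (r * u))]
      _ = K * r⁻¹ * ∫ w in Ioi 0, φ w := by
          rw [integral_comp_mul_left_Ioi φ 0 hr, mul_zero, smul_eq_mul, ← mul_assoc]
  rw [hsubst, integral_rpow_mul_linear_log_sq_mul_exp_neg ha, hK, rpow_neg hr.le, rpow_add hr,
    rpow_one, rpow_sub_one hα.ne', rpow_sub hα, rpow_two]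
  field_simp
  ring
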